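/- Let (Σ,σ) be a finite-entropy countable Markov shift with suspension flow Φ over a roof function τ : Σ → ℝ⁺ bounded away from zero, and assume the entropy map on ergodic shift-invariant measures is upper semi-continuous. Let (ν_n) be ergodic flow-invariant probability measures converging weak* to an ergodic flow-invariant ν, with ν_n = (μ_n × Leb)/∫τ dμ_n, ν = (μ × Leb)/∫τ dμ. Then limsup_{n→∞} h_{ν_n}(Φ) ≤ h_ν(Φ). -/
import Mathlib


open MeasureTheory Filter Topology
open scoped ENNReal

/-- Entropy of a finite (indexed) collection of sets: `-∑ μ(Pᵢ) log μ(Pᵢ)`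
(with `0 log 0 = 0`, automatic since `Real.log 0 = 0`). -/
noncomputable def partEnt {X : Type*} [MeasurableSpace X] (μ : Measure X)
    {ι : Type*} [Fintype ι] (P : ι → Set X) : ℝ :=
  -∑ i, ((μ (P i)).toReal * Real.log (μ (P i)).toReal)

/-- The common refinement `⋁_{i=0}^{n-1} T^{-i} 𝒫`, indexed by words `s : Fin n → Fin N`. -/
def refineP {X : Type*} (T : X → X) {N : ℕ} (P : Fin N → Set X) (n : ℕ) :
    (Fin n → Fin N) → Set X :=
  fun s => ⋂ i : Fin n, (T^[(i : ℕ)]) ⁻¹' P (s i)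

/-- Entropy of `μ` relative to the finite partition `P`:
`h_μ(T,𝒫) = inf_n (1/n) H_μ(𝒫ⁿ)` (which equals the limit, by subadditivity). -/
noncomputable def dynEnt {X : Type*} [MeasurableSpace X] (T : X → X) (μ : Measure X)
    {N : ℕ} (P : Fin N → Set X) : ℝ :=
  ⨅ n : ℕ, partEnt μ (refineP T P (n + 1)) / (n + 1)

/-- `P` is a finite Borel partition of `X`. -/
def IsFinPartition {X : Type*} [MeasurableSpace X] {N : ℕ} (P : Fin N → Set X) : Prop :=
  (∀ i, MeasurableSet (P i)) ∧ (Pairwise fun i j => Disjoint (P i) (P j)) ∧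
    (⋃ i, P i) = Set.univ

/-- Kolmogorov–Sinai entropy of `(T,μ)`: supremum of `h_μ(T,𝒫)` over all finite Borel
partitions `𝒫`, valued in `ℝ≥0∞`. -/
noncomputable def KSEnt {X : Type*} [MeasurableSpace X] (T : X → X) (μ : Measure X) : ℝ≥0∞ :=
  ⨆ (N : ℕ) (P : {P : Fin N → Set X // IsFinPartition P}), ENNReal.ofReal (dynEnt T μ P.1)
/-- The two-sided countable Markov shift space determined by the transition relation `S`
on the countable alphabet `A`: bi-infinite admissible sequences. -/
def CMS {A : Type*} (S : A → A → Prop) : Set (ℤ → A) :=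
  {x | ∀ i : ℤ, S (x i) (x (i + 1))}

/-- The left shift map `σ` on the countable Markov shift. -/
def cmsShift {A : Type*} (S : A → A → Prop) : CMS S → CMS S :=
  fun x => ⟨fun i => x.1 (i + 1), fun i => by
    simpa [add_assoc, add_comm, add_left_comm] using x.2 (i + 1)⟩

/-- The suspension space `Y = {(x,t) : 0 ≤ t ≤ τ(x)}` over the shift space. -/
def Ysp {A : Type*} (S : A → A → Prop) (τ : CMS S → ℝ) : Set (CMS S × ℝ) :=
  {p | 0 ≤ p.2 ∧ p.2 ≤ τ p.1}


noncomputable def phi : ℝ → ℝ := fun t => 6*t*(1-t)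

lemma phi_cont : Continuous phi := by unfold phi; continuity

lemma phi_int : ∫ t in (0:ℝ)..1, phi t = 1 := by
  have h : phi = fun t => 6*t - 6*t^2 := by funext t; unfold phi; ring
  rw [h]
  rw [intervalIntegral.integral_sub (by apply Continuous.intervalIntegrable; continuity)
      (by apply Continuous.intervalIntegrable; continuity)]
  have hx : (∫ x in (0:ℝ)..1, 6 * x) = 6 * ∫ x in (0:ℝ)..1, x :=
    intervalIntegral.integral_const_mul 6 id
  norm_num [hx, intervalIntegral.integral_const_mul, integral_id, integral_pow]

lemma phi_scaled {T : ℝ} (hT : 0 < T) : ∫ t in (0:ℝ)..T, phi (t/T) = T := by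
  rw [intervalIntegral.integral_comp_div phi hT.ne']
  simp [phi_int, hT.ne']

lemma phi_bound {u : ℝ} (h0 : 0 ≤ u) (h1 : u ≤ 1) : |phi u| ≤ 3/2 := by
  unfold phi
  rw [abs_le]
  constructor <;> nlinarith [sq_nonneg (u - 1/2), sq_nonneg u, sq_nonneg (1-u)]

lemma phi_zero : phi 0 = 0 := by simp [phi]
lemma phi_one : phi 1 = 0 := by simp [phi]

section KeyHelpers
open intervalIntegral
variable {A : Type*} [Countable A] [TopologicalSpace A] [DiscreteTopology A]
    [MeasurableSpace A] [BorelSpace A]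
    (S : A → A → Prop) (τ : CMS S → ℝ)
variable {A : Type*} [Countable A] [TopologicalSpace A] [DiscreteTopology A]
    [MeasurableSpace A] [BorelSpace A]
    (S : A → A → Prop) (τ : CMS S → ℝ)

lemma Ysp_meas (hτcont : Continuous τ) : MeasurableSet (Ysp S τ) := by
  have h1 : IsClosed {p : CMS S × ℝ | 0 ≤ p.2} := isClosed_le continuous_const continuous_snd
  have h2 : IsClosed {p : CMS S × ℝ | p.2 ≤ τ p.1} :=
    isClosed_le continuous_snd (hτcont.comp continuous_fst)
  have : Ysp S τ = {p : CMS S × ℝ | 0 ≤ p.2} ∩ {p : CMS S × ℝ | p.2 ≤ τ p.1} := rfl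
  rw [this]
  exact (h1.inter h2).measurableSet

lemma key_integral (hτcont : Continuous τ) (c : ℝ) (hc : 0 < c) (hτ : ∀ x, c ≤ τ x) (ρ : ProbabilityMeasure (CMS S)) (hint : Integrable τ (ρ : Measure (CMS S)))
    (g : CMS S → ℝ) (hg : Continuous g) (M : ℝ) (hM0 : 0 ≤ M) (hM : ∀ x, |g x| ≤ M) :
    ∫ p : Ysp S τ, g (p : CMS S × ℝ).1 * phi ((p : CMS S × ℝ).2 / τ (p : CMS S × ℝ).1)
        ∂(((ρ : Measure (CMS S)).prod (volume : Measure ℝ)).comap Subtype.val)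
      = ∫ x, g x * τ x ∂(ρ : Measure (CMS S)) := by
  have hτpos : ∀ x, 0 < τ x := fun x => lt_of_lt_of_le hc (hτ x)
  have hτne : ∀ x, τ x ≠ 0 := fun x => (hτpos x).ne'
  set fval : CMS S × ℝ → ℝ := fun p => g p.1 * phi (p.2 / τ p.1) with hfval
  have hfcont : Continuous fval := by
    apply (hg.comp continuous_fst).mul
    exact phi_cont.comp (continuous_snd.div (hτcont.comp continuous_fst)
      (fun p => hτne p.1))
  have hYm := Ysp_meas S τ hτcont
  have hmem : ∀ (x : CMS S) (t : ℝ), ((x, t) ∈ Ysp S τ) ↔ t ∈ Set.Icc 0 (τ x) := by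
    intro x t; simp [Ysp, Set.mem_Icc]
  -- measure of Ysp is finite
  have hprodY : ((ρ : Measure (CMS S)).prod (volume : Measure ℝ)) (Ysp S τ)
      = ENNReal.ofReal (∫ x, τ x ∂(ρ : Measure (CMS S))) := by
    rw [Measure.prod_apply hYm]
    have hpre : ∀ x : CMS S, (Prod.mk x ⁻¹' Ysp S τ) = Set.Icc 0 (τ x) := by
      intro x; ext t; simp [Ysp, Set.mem_Icc]
    simp_rw [hpre, Real.volume_Icc, sub_zero]
    rw [← ofReal_integral_eq_lintegral_ofReal hint
      (Eventually.of_forall fun x => (hτpos x).le)]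
  -- integrability of the indicator
  have hbound : ∀ p ∈ Ysp S τ, ‖fval p‖ ≤ M * (3/2) := by
    rintro ⟨x, t⟩ ⟨h0, h1⟩
    have hu0 : 0 ≤ t / τ x := div_nonneg h0 (hτpos x).le
    have hu1 : t / τ x ≤ 1 := (div_le_one (hτpos x)).2 h1
    calc ‖fval (x, t)‖ = |g x| * |phi (t / τ x)| := by
          simp [hfval, abs_mul]
      _ ≤ M * (3/2) := mul_le_mul (hM x) (phi_bound hu0 hu1) (abs_nonneg _) hM0
  have hInt : Integrable ((Ysp S τ).indicator fval)
      ((ρ : Measure (CMS S)).prod (volume : Measure ℝ)) := by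
    rw [integrable_indicator_iff hYm]
    apply Measure.integrableOn_of_bounded (M := M * (3/2))
    · rw [hprodY]; exact ENNReal.ofReal_ne_top
    · exact hfcont.aestronglyMeasurable
    · exact (ae_restrict_iff' hYm).2 (Eventually.of_forall hbound)
  calc ∫ p : Ysp S τ, fval (p : CMS S × ℝ)
        ∂(((ρ : Measure (CMS S)).prod (volume : Measure ℝ)).comap Subtype.val)
      = ∫ p in Ysp S τ, fval p ∂((ρ : Measure (CMS S)).prod (volume : Measure ℝ)) :=
        integral_subtype_comap hYm fval
    _ = ∫ p, (Ysp S τ).indicator fval p ∂((ρ : Measure (CMS S)).prod (volume : Measure ℝ)) :=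
        (MeasureTheory.integral_indicator hYm).symm
    _ = ∫ x, ∫ t, (Ysp S τ).indicator fval (x, t) ∂(volume : Measure ℝ)
          ∂(ρ : Measure (CMS S)) := integral_prod _ hInt
    _ = ∫ x, g x * τ x ∂(ρ : Measure (CMS S)) := by
        congr 1
        funext x
        have hind : ∀ t : ℝ, (Ysp S τ).indicator fval (x, t)
            = (Set.Icc 0 (τ x)).indicator (fun t => g x * phi (t / τ x)) t := by
          intro t
          by_cases h : t ∈ Set.Icc 0 (τ x)
          · rw [Set.indicator_of_mem ((hmem x t).2 h), Set.indicator_of_mem h]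
          · rw [Set.indicator_of_notMem (fun hh => h ((hmem x t).1 hh)),
              Set.indicator_of_notMem h]
        simp_rw [hind]
        rw [MeasureTheory.integral_indicator measurableSet_Icc, integral_Icc_eq_integral_Ioc,
          ← intervalIntegral.integral_of_le (hτpos x).le,
          intervalIntegral.integral_const_mul, phi_scaled (hτpos x)]

end KeyHelpers

/-- Upper semi-continuity of the entropy of the suspension flow at ergodic measures: with
`h_{ν'}(Φ) = h_{μ'}(σ)/∫τ dμ'` (Abramov), if the normalized suspension measures
`νₙ = (μₙ × Leb)/∫τ dμₙ` converge weakly* to `ν = (μ × Leb)/∫τ dμ`, then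
`limsup h_{νₙ}(Φ) ≤ h_ν(Φ)`. -/
theorem stmt19 {A : Type*} [Countable A] [TopologicalSpace A] [DiscreteTopology A]
    [MeasurableSpace A] [BorelSpace A]
    (S : A → A → Prop)
    (hfin : ∃ C : ℝ≥0∞, C ≠ ⊤ ∧ ∀ ρ : ProbabilityMeasure (CMS S),
      Ergodic (cmsShift S) (ρ : Measure (CMS S)) →
        KSEnt (cmsShift S) (ρ : Measure (CMS S)) ≤ C)
    (husc : ∀ ρ : ProbabilityMeasure (CMS S), Ergodic (cmsShift S) (ρ : Measure (CMS S)) →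
      ∀ ρs : ℕ → ProbabilityMeasure (CMS S),
        (∀ n, Ergodic (cmsShift S) ((ρs n : Measure (CMS S)))) →
        Tendsto ρs atTop (𝓝 ρ) →
        atTop.limsup (fun n => KSEnt (cmsShift S) (ρs n : Measure (CMS S)))
          ≤ KSEnt (cmsShift S) (ρ : Measure (CMS S)))
    (τ : CMS S → ℝ) (hτcont : Continuous τ) (c : ℝ) (hc : 0 < c) (hτ : ∀ x, c ≤ τ x)
    (μs : ℕ → ProbabilityMeasure (CMS S)) (μ : ProbabilityMeasure (CMS S))
    (hergs : ∀ n, Ergodic (cmsShift S) ((μs n : Measure (CMS S))))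
    (herg : Ergodic (cmsShift S) (μ : Measure (CMS S)))
    (hints : ∀ n, Integrable τ (μs n : Measure (CMS S)))
    (hint : Integrable τ (μ : Measure (CMS S)))
    (νs : ℕ → Measure (Ysp S τ)) (ν : Measure (Ysp S τ))
    (hνs : ∀ n, νs n = (ENNReal.ofReal (∫ x, τ x ∂(μs n : Measure (CMS S))))⁻¹ •
      (((μs n : Measure (CMS S)).prod (volume : Measure ℝ)).comap
        (Subtype.val : Ysp S τ → CMS S × ℝ)))
    (hν : ν = (ENNReal.ofReal (∫ x, τ x ∂(μ : Measure (CMS S))))⁻¹ •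
      (((μ : Measure (CMS S)).prod (volume : Measure ℝ)).comap
        (Subtype.val : Ysp S τ → CMS S × ℝ)))
    (hw : ∀ F : BoundedContinuousFunction (Ysp S τ) ℝ,
      (∀ (x : CMS S) (y z : Ysp S τ), y.1 = (x, τ x) → z.1 = (cmsShift S x, 0) → F y = F z) →
      Tendsto (fun n => ∫ p, F p ∂(νs n)) atTop (𝓝 (∫ p, F p ∂ν))) :
    atTop.limsup (fun n =>
        KSEnt (cmsShift S) (μs n : Measure (CMS S))
          / ENNReal.ofReal (∫ x, τ x ∂(μs n : Measure (CMS S))))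
      ≤ KSEnt (cmsShift S) (μ : Measure (CMS S))
          / ENNReal.ofReal (∫ x, τ x ∂(μ : Measure (CMS S))) := by
  have hτpos : ∀ x, 0 < τ x := fun x => lt_of_lt_of_le hc (hτ x)
  have hτne : ∀ x, τ x ≠ 0 := fun x => (hτpos x).ne'
  -- integrals of τ are at least c
  have hLc : ∀ ρ : ProbabilityMeasure (CMS S), Integrable τ (ρ : Measure (CMS S)) →
      c ≤ ∫ x, τ x ∂(ρ : Measure (CMS S)) := by
    intro ρ hi
    have h := integral_mono (integrable_const c) hi hτ
    simpa using h
  have hLmpos : 0 < ∫ x, τ x ∂(μ : Measure (CMS S)) := lt_of_lt_of_le hc (hLc μ hint)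
  have hLnpos : ∀ n, 0 < ∫ x, τ x ∂(μs n : Measure (CMS S)) :=
    fun n => lt_of_lt_of_le hc (hLc (μs n) (hints n))
  -- key weak-convergence consequence
  have key2 : ∀ g : CMS S → ℝ, Continuous g → ∀ M : ℝ, 0 ≤ M → (∀ x, |g x| ≤ M) →
      Tendsto (fun n => (∫ x, τ x ∂(μs n : Measure (CMS S)))⁻¹
          * ∫ x, g x * τ x ∂(μs n : Measure (CMS S))) atTop
        (𝓝 ((∫ x, τ x ∂(μ : Measure (CMS S)))⁻¹
          * ∫ x, g x * τ x ∂(μ : Measure (CMS S)))) := by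
    intro g hg M hM0 hM
    set fval : CMS S × ℝ → ℝ := fun p => g p.1 * phi (p.2 / τ p.1) with hfval
    have hfcont : Continuous fval := by
      apply (hg.comp continuous_fst).mul
      exact phi_cont.comp (continuous_snd.div (hτcont.comp continuous_fst)
        (fun p => hτne p.1))
    have hbound : ∀ p : Ysp S τ, ‖fval (p : CMS S × ℝ)‖ ≤ M * (3/2) := by
      rintro ⟨⟨x, t⟩, h0, h1⟩
      have hu0 : 0 ≤ t / τ x := div_nonneg h0 (hτpos x).le
      have hu1 : t / τ x ≤ 1 := (div_le_one (hτpos x)).2 h1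
      calc ‖fval (x, t)‖ = |g x| * |phi (t / τ x)| := by simp [hfval, abs_mul]
        _ ≤ M * (3/2) := mul_le_mul (hM x) (phi_bound hu0 hu1) (abs_nonneg _) hM0
    let F : BoundedContinuousFunction (Ysp S τ) ℝ :=
      BoundedContinuousFunction.ofNormedAddCommGroup
        (fun p : Ysp S τ => fval (p : CMS S × ℝ))
        (hfcont.comp continuous_subtype_val) (M * (3/2)) hbound
    have hFcoe : ∀ p : Ysp S τ,
        F p = g (p : CMS S × ℝ).1 * phi ((p : CMS S × ℝ).2 / τ (p : CMS S × ℝ).1) :=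
      fun p => rfl
    have hcompat : ∀ (x : CMS S) (y z : Ysp S τ),
        y.1 = (x, τ x) → z.1 = (cmsShift S x, 0) → F y = F z := by
      intro x y z hy hz
      have h1 : F y = fval (x, τ x) := by rw [hFcoe, hy]
      have h2 : F z = fval (cmsShift S x, 0) := by rw [hFcoe, hz]
      rw [h1, h2]
      simp [hfval, div_self (hτne x), phi_one, phi_zero]
    have hcalc : ∀ (ρ : ProbabilityMeasure (CMS S)), Integrable τ (ρ : Measure (CMS S)) →
        ∫ p, F p ∂((ENNReal.ofReal (∫ x, τ x ∂(ρ : Measure (CMS S))))⁻¹ •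
            (((ρ : Measure (CMS S)).prod (volume : Measure ℝ)).comap
              (Subtype.val : Ysp S τ → CMS S × ℝ)))
          = (∫ x, τ x ∂(ρ : Measure (CMS S)))⁻¹ * ∫ x, g x * τ x ∂(ρ : Measure (CMS S)) := by
      intro ρ hi
      have hLpos : 0 < ∫ x, τ x ∂(ρ : Measure (CMS S)) := lt_of_lt_of_le hc (hLc ρ hi)
      rw [MeasureTheory.integral_smul_measure]
      have hk := key_integral S τ hτcont c hc hτ ρ hi g hg M hM0 hM
      simp only [hFcoe]
      rw [hk, ENNReal.toReal_inv, ENNReal.toReal_ofReal hLpos.le, smul_eq_mul]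
    have htd := hw F hcompat
    have heqn : (fun n => ∫ p, F p ∂(νs n)) = fun n =>
        (∫ x, τ x ∂(μs n : Measure (CMS S)))⁻¹ * ∫ x, g x * τ x ∂(μs n : Measure (CMS S)) := by
      funext n; rw [hνs n, hcalc (μs n) (hints n)]
    have heqm : ∫ p, F p ∂ν
        = (∫ x, τ x ∂(μ : Measure (CMS S)))⁻¹ * ∫ x, g x * τ x ∂(μ : Measure (CMS S)) := by
      rw [hν, hcalc μ hint]
    rw [heqn, heqm] at htd
    exact htd
  -- convergence of the reciprocals of the integrals of τ
  have hinv : Tendsto (fun n => (∫ x, τ x ∂(μs n : Measure (CMS S)))⁻¹) atTop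
      (𝓝 (∫ x, τ x ∂(μ : Measure (CMS S)))⁻¹) := by
    have hb : ∀ x, |(τ x)⁻¹| ≤ c⁻¹ := by
      intro x
      rw [abs_of_pos (inv_pos.2 (hτpos x))]
      exact inv_anti₀ hc (hτ x)
    have h1 : ∀ (ρ : ProbabilityMeasure (CMS S)),
        ∫ x, (τ x)⁻¹ * τ x ∂(ρ : Measure (CMS S)) = 1 := by
      intro ρ
      have : (fun x : CMS S => (τ x)⁻¹ * τ x) = fun _ => (1 : ℝ) :=
        funext fun x => inv_mul_cancel₀ (hτne x)
      rw [this]; simp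
    have := key2 (fun x => (τ x)⁻¹)
      (hτcont.inv₀ hτne)
      c⁻¹ (inv_nonneg.2 hc.le) hb
    simpa [h1] using this
  have hL : Tendsto (fun n => ∫ x, τ x ∂(μs n : Measure (CMS S))) atTop
      (𝓝 (∫ x, τ x ∂(μ : Measure (CMS S)))) := by
    have h2 := hinv.inv₀ (inv_ne_zero hLmpos.ne')
    simpa [inv_inv] using h2
  -- weak convergence of the base measures
  have hμconv : Tendsto μs atTop (𝓝 μ) := by
    rw [ProbabilityMeasure.tendsto_iff_forall_integral_tendsto]
    intro f
    have hgb : ∀ x, |f x / τ x| ≤ ‖f‖ / c := by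
      intro x
      rw [abs_div, abs_of_pos (hτpos x)]
      exact div_le_div₀ (norm_nonneg f) (f.norm_coe_le_norm x) hc (hτ x)
    have hkey := key2 (fun x => f x / τ x) (f.continuous.div hτcont hτne)
      (‖f‖ / c) (div_nonneg (norm_nonneg f) hc.le) hgb
    have heq : ∀ x : CMS S, (f x / τ x) * τ x = f x := fun x => div_mul_cancel₀ (f x) (hτne x)
    simp only [heq] at hkey
    have hprod := hkey.mul hL
    have hsim : (fun n => ((∫ x, τ x ∂(μs n : Measure (CMS S)))⁻¹
          * ∫ x, f x ∂(μs n : Measure (CMS S))) * ∫ x, τ x ∂(μs n : Measure (CMS S)))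
        = fun n => ∫ x, f x ∂(μs n : Measure (CMS S)) := by
      funext n
      rw [mul_comm ((∫ x, τ x ∂(μs n : Measure (CMS S)))⁻¹) _, mul_assoc,
        inv_mul_cancel₀ (hLnpos n).ne', mul_one]
    have hsim2 : ((∫ x, τ x ∂(μ : Measure (CMS S)))⁻¹
          * ∫ x, f x ∂(μ : Measure (CMS S))) * ∫ x, τ x ∂(μ : Measure (CMS S))
        = ∫ x, f x ∂(μ : Measure (CMS S)) := by
      rw [mul_comm ((∫ x, τ x ∂(μ : Measure (CMS S)))⁻¹) _, mul_assoc,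
        inv_mul_cancel₀ hLmpos.ne', mul_one]
    rw [hsim, hsim2] at hprod
    exact hprod
  have hKS := husc μ herg μs hergs hμconv
  -- final ENNReal limsup manipulation
  obtain ⟨C, hCtop, hC⟩ := hfin
  have hulim : atTop.limsup (fun n => KSEnt (cmsShift S) (μs n : Measure (CMS S))) ≠ ⊤ := by
    refine ne_top_of_le_ne_top hCtop ?_
    exact limsup_le_of_le (by isBoundedDefault)
      (Eventually.of_forall fun n => hC (μs n) (hergs n))
  have hvt : Tendsto (fun n => (ENNReal.ofReal (∫ x, τ x ∂(μs n : Measure (CMS S))))⁻¹) atTop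
      (𝓝 (ENNReal.ofReal (∫ x, τ x ∂(μ : Measure (CMS S))))⁻¹) :=
    (ENNReal.tendsto_ofReal hL).inv
  have hvl : atTop.limsup (fun n => (ENNReal.ofReal (∫ x, τ x ∂(μs n : Measure (CMS S))))⁻¹)
      = (ENNReal.ofReal (∫ x, τ x ∂(μ : Measure (CMS S))))⁻¹ := hvt.limsup_eq
  have hof0 : ENNReal.ofReal (∫ x, τ x ∂(μ : Measure (CMS S))) ≠ 0 :=
    (ENNReal.ofReal_pos.2 hLmpos).ne'
  simp only [div_eq_mul_inv]
  calc atTop.limsup (fun n => KSEnt (cmsShift S) (μs n : Measure (CMS S))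
          * (ENNReal.ofReal (∫ x, τ x ∂(μs n : Measure (CMS S))))⁻¹)
      ≤ atTop.limsup (fun n => KSEnt (cmsShift S) (μs n : Measure (CMS S)))
          * atTop.limsup (fun n =>
            (ENNReal.ofReal (∫ x, τ x ∂(μs n : Measure (CMS S))))⁻¹) :=
        ENNReal.limsup_mul_le' (Or.inr (by rw [hvl]; exact ENNReal.inv_ne_top.2 hof0))
          (Or.inl hulim)
    _ ≤ KSEnt (cmsShift S) (μ : Measure (CMS S))
          * (ENNReal.ofReal (∫ x, τ x ∂(μ : Measure (CMS S))))⁻¹ := by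
        rw [hvl]; exact mul_le_mul_left hKS _
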